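/- arXiv:2002.06195 — 5 statements merged into one kernel-verified Lean document; each statement's English description precedes it below -/
import Mathlib

section
/- Let f : ℝ → ℝ be twice differentiable with |f''(x)| ≤ u for all x, where u > 0. Suppose f(a) = ε and f'(a) = k. Then there is no point b with 0 < |b - a| < 2|k|/u such that f(b) = ε and f'(b) = k. -/
theorem stmt_0 (f : ℝ → ℝ) (u ε k a : ℝ) (hu : 0 < u)
    (hdiff : Differentiable ℝ f) (hdiff2 : Differentiable ℝ (deriv f))
    (hbound : ∀ x, |deriv (deriv f) x| ≤ u)
    (hfa : f a = ε) (hfa' : deriv f a = k) :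
    ¬ ∃ b : ℝ, 0 < |b - a| ∧ |b - a| < 2 * |k| / u ∧ f b = ε ∧ deriv f b = k := by
  rintro ⟨b, hb0, hb1, hfb, hfb'⟩
  have hab : a ≠ b := fun h => by simp [h] at hb0
  have key : ∀ x y : ℝ, |deriv f y - deriv f x| ≤ u * |y - x| := by
    intro x y
    have := Convex.norm_image_sub_le_of_norm_deriv_le
      (f := deriv f) (s := Set.univ)
      (fun z _ => hdiff2 z)
      (fun z _ => by simpa [Real.norm_eq_abs] using hbound z)
      convex_univ (Set.mem_univ x) (Set.mem_univ y)
    simpa [Real.norm_eq_abs] using this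
  have hub : |b - a| * u < 2 * |k| := (lt_div_iff₀ hu).mp hb1
  rcases lt_or_gt_of_ne hab with h | h
  · obtain ⟨c, hc, hc0⟩ := exists_deriv_eq_zero (f := f) h
      hdiff.continuous.continuousOn (hfa.trans hfb.symm)
    have h1 : |k| ≤ u * (c - a) := by
      have := key c a
      rw [hfa', hc0, sub_zero, abs_of_neg (sub_neg.mpr hc.1), neg_sub] at this
      exact this
    have h2 : |k| ≤ u * (b - c) := by
      have := key c b
      rw [hfb', hc0, sub_zero, abs_of_pos (sub_pos.mpr hc.2)] at this
      exact this
    rw [abs_of_pos (sub_pos.mpr h)] at hub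
    nlinarith
  · obtain ⟨c, hc, hc0⟩ := exists_deriv_eq_zero (f := f) h
      hdiff.continuous.continuousOn (hfb.trans hfa.symm)
    have h1 : |k| ≤ u * (c - b) := by
      have := key c b
      rw [hfb', hc0, sub_zero, abs_of_neg (sub_neg.mpr hc.1), neg_sub] at this
      exact this
    have h2 : |k| ≤ u * (a - c) := by
      have := key c a
      rw [hfa', hc0, sub_zero, abs_of_pos (sub_pos.mpr hc.2)] at this
      exact this
    rw [abs_of_neg (sub_neg.mpr h), neg_sub] at hub
    nlinarith
end

section
/- Let f : ℝ → ℝ be twice differentiable with |f''(x)| ≤ u for all x, where u > 0. If f(a) = f(b), f'(a) = f'(b) = k, and a ≠ b, then |b - a| ≥ 2|k|/u. -/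
/-! By Rolle's theorem `f'` vanishes at some `c` strictly between `a` and `b`. Since `|f''| ≤ u`,
`f'` is `u`-Lipschitz, so `|k| = |f' a - f' c| ≤ u |c - a|` and `|k| = |f' b - f' c| ≤ u |b - c|`;
adding the two bounds gives `2 |k| ≤ u |b - a|`. -/

theorem abs_sub_le_mul_of_abs_deriv_le {g : ℝ → ℝ} {u : ℝ} (hg : Differentiable ℝ g)
    (hbound : ∀ x, |deriv g x| ≤ u) (x y : ℝ) : |g x - g y| ≤ u * |x - y| :=
  convex_univ.norm_image_sub_le_of_norm_deriv_le (fun z _ => hg z) (fun z _ => hbound z)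
    (Set.mem_univ y) (Set.mem_univ x)

theorem two_mul_abs_deriv_le_of_eq {f : ℝ → ℝ} {u k a b : ℝ}
    (hf : Differentiable ℝ f) (hf' : Differentiable ℝ (deriv f))
    (hbound : ∀ x, |deriv (deriv f) x| ≤ u)
    (hab : f a = f b) (ha : deriv f a = k) (hb : deriv f b = k) (hne : a ≠ b) :
    2 * |k| ≤ u * |b - a| := by
  wlog hlt : a < b generalizing a b
  · rw [abs_sub_comm]
    exact this hab.symm hb ha hne.symm (hne.lt_or_gt.resolve_left hlt)
  obtain ⟨c, ⟨hac, hcb⟩, hc⟩ := exists_deriv_eq_zero hlt hf.continuous.continuousOn hab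
  have hka : |k| ≤ u * (c - a) := by
    simpa [ha, hc, abs_of_pos (sub_pos.2 hac)] using
      abs_sub_le_mul_of_abs_deriv_le hf' hbound c a
  have hkb : |k| ≤ u * (b - c) := by
    simpa [hb, hc, abs_of_pos (sub_pos.2 hcb)] using
      abs_sub_le_mul_of_abs_deriv_le hf' hbound b c
  rw [abs_of_pos (sub_pos.2 hlt)]
  linarith

theorem stmt_1 (f : ℝ → ℝ) (u k a b : ℝ) (hu : 0 < u)
    (hdiff : Differentiable ℝ f) (hdiff2 : Differentiable ℝ (deriv f))
    (hbound : ∀ x, |deriv (deriv f) x| ≤ u)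
    (hab : f a = f b) (ha' : deriv f a = k) (hb' : deriv f b = k) (hne : a ≠ b) :
    2 * |k| / u ≤ |b - a| := by
  rw [div_le_iff₀ hu, mul_comm |b - a|]
  exact two_mul_abs_deriv_le_of_eq hdiff hdiff2 hbound hab ha' hb' hne
end

section
/- Let f : ℝ → ℝ be continuously differentiable on an open interval (a, b). Suppose x₁ < x₂ are points in (a, b) with f(x₁) = f(x₂) and f'(x₁)·f'(x₂) > 0. Then there exists x₀ ∈ (x₁, x₂) such that f(x₀) = f(x₁) and f'(x₀)·f'(x₁) ≤ 0. -/
/-! Assume `f' x₁, f' x₂ > 0` (otherwise replace `f` by `-f`). Then `f > f x₁` just to the right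
of `x₁`, and `f x₂ = f x₁`, so there is a first point `x₀ > x₁` where `f` returns to the level
`f x₁`. Since `f` lies above that level on `(x₁, x₀)`, the left difference quotients at `x₀` are
nonpositive, so `f' x₀ ≤ 0`; in particular `x₀ ≠ x₂`. -/

open Set Filter Topology

theorem HasDerivAt.eventually_nhdsGT_lt_of_pos {f : ℝ → ℝ} {f' x : ℝ} (hf : HasDerivAt f f' x)
    (hpos : 0 < f') : ∀ᶠ y in 𝓝[>] x, f x < f y := by
  have hslope : ∀ᶠ y in 𝓝[>] x, 0 < slope f x y :=
    (hasDerivAt_iff_tendsto_slope_left_right.mp hf).2.eventually (eventually_gt_nhds hpos)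
  filter_upwards [hslope, self_mem_nhdsWithin] with y hy hxy
  exact (slope_pos_iff_of_le (le_of_lt hxy)).mp hy

theorem HasDerivAt.nonpos_of_eventually_nhdsLT_le {f : ℝ → ℝ} {f' x : ℝ} (hf : HasDerivAt f f' x)
    (hle : ∀ᶠ y in 𝓝[<] x, f x ≤ f y) : f' ≤ 0 := by
  refine le_of_tendsto (hasDerivAt_iff_tendsto_slope_left_right.mp hf).1 ?_
  filter_upwards [hle, self_mem_nhdsWithin] with y hy hyx
  rw [slope_comm]
  exact (slope_nonpos_iff_of_le (le_of_lt hyx)).mpr hy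

theorem ContinuousOn.exists_first_eq_of_lt {f : ℝ → ℝ} {c d y : ℝ} (hf : ContinuousOn f (Icc c d))
    (hcd : c ≤ d) (hc : y < f c) (hd : f d = y) :
    ∃ x₀ ∈ Ioc c d, f x₀ = y ∧ ∀ x ∈ Ico c x₀, y < f x := by
  set S := Icc c d ∩ f ⁻¹' {y}
  have hS : IsCompact S :=
    isCompact_Icc.of_isClosed_subset (hf.preimage_isClosed_of_isClosed isClosed_Icc
      isClosed_singleton) inter_subset_left
  have hx₀ : sInf S ∈ S := hS.sInf_mem ⟨d, ⟨hcd, le_rfl⟩, hd⟩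
  have habove : ∀ x ∈ Ico c (sInf S), y < f x := by
    intro x ⟨hcx, hxx₀⟩
    by_contra! hfx
    obtain ⟨z, hz, hfz⟩ := intermediate_value_Icc' hcx (hf.mono (Icc_subset_Icc_right
      (hxx₀.le.trans hx₀.1.2))) ⟨hfx, hc.le⟩
    have hzS : z ∈ S := ⟨⟨hz.1, hz.2.trans (hxx₀.le.trans hx₀.1.2)⟩, hfz⟩
    exact (csInf_le hS.bddBelow hzS).not_gt (hz.2.trans_lt hxx₀)
  have hcx₀ : c < sInf S :=
    hx₀.1.1.lt_of_ne fun h => hc.ne' (h ▸ hx₀.2)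
  exact ⟨sInf S, ⟨hcx₀, hx₀.1.2⟩, hx₀.2, habove⟩

theorem exists_eq_deriv_nonpos_of_deriv_pos {f f' : ℝ → ℝ} {x₁ x₂ : ℝ}
    (hf : ∀ x ∈ Icc x₁ x₂, HasDerivAt f (f' x) x) (hlt : x₁ < x₂) (heq : f x₁ = f x₂)
    (h₁ : 0 < f' x₁) (h₂ : 0 < f' x₂) :
    ∃ x₀ ∈ Ioo x₁ x₂, f x₀ = f x₁ ∧ f' x₀ ≤ 0 := by
  have hcont : ContinuousOn f (Icc x₁ x₂) := fun x hx =>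
    (hf x hx).continuousAt.continuousWithinAt
  obtain ⟨c, hx₁c, hc⟩ := mem_nhdsGT_iff_exists_Ioc_subset.mp
    (((hf x₁ ⟨le_rfl, hlt.le⟩).eventually_nhdsGT_lt_of_pos h₁).and (Ioo_mem_nhdsGT hlt))
  have hcx₂ : c < x₂ := (hc ⟨hx₁c, le_rfl⟩).2.2
  obtain ⟨x₀, ⟨hcx₀, hx₀x₂⟩, hfx₀, habove⟩ :=
    (hcont.mono (Icc_subset_Icc_left hx₁c.le)).exists_first_eq_of_lt hcx₂.le
      (hc ⟨hx₁c, le_rfl⟩).1 heq.symm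
  have hx₁x₀ : x₁ < x₀ := hx₁c.trans hcx₀
  have hderiv₀ : f' x₀ ≤ 0 := by
    refine (hf x₀ ⟨hx₁x₀.le, hx₀x₂⟩).nonpos_of_eventually_nhdsLT_le ?_
    filter_upwards [Ioo_mem_nhdsLT hx₁x₀] with x ⟨hx₁x, hxx₀⟩
    rw [hfx₀]
    rcases le_or_gt x c with hxc | hcx
    · exact (hc ⟨hx₁x, hxc⟩).1.le
    · exact (habove x ⟨hcx.le, hxx₀⟩).le
  have hx₀x₂' : x₀ < x₂ := hx₀x₂.lt_of_ne fun h => (h ▸ hderiv₀).not_gt h₂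
  exact ⟨x₀, ⟨hx₁x₀, hx₀x₂'⟩, hfx₀, hderiv₀⟩

theorem stmt_2_general (f f' : ℝ → ℝ) (a b x₁ x₂ : ℝ)
    (hderiv : ∀ x ∈ Set.Ioo a b, HasDerivAt f (f' x) x)
    (hx₁ : x₁ ∈ Set.Ioo a b) (hx₂ : x₂ ∈ Set.Ioo a b) (hlt : x₁ < x₂)
    (heq : f x₁ = f x₂) (hsign : f' x₁ * f' x₂ > 0) :
    ∃ x₀ ∈ Set.Ioo x₁ x₂, f x₀ = f x₁ ∧ f' x₀ * f' x₁ ≤ 0 := by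
  have hf : ∀ x ∈ Icc x₁ x₂, HasDerivAt f (f' x) x :=
    fun x hx => hderiv x (Icc_subset_Ioo hx₁.1 hx₂.2 hx)
  rcases mul_pos_iff.mp hsign with ⟨h₁, h₂⟩ | ⟨h₁, h₂⟩
  · obtain ⟨x₀, hx₀, hfx₀, hderiv₀⟩ := exists_eq_deriv_nonpos_of_deriv_pos hf hlt heq h₁ h₂
    exact ⟨x₀, hx₀, hfx₀, mul_nonpos_of_nonpos_of_nonneg hderiv₀ h₁.le⟩
  · obtain ⟨x₀, hx₀, hfx₀, hderiv₀⟩ := exists_eq_deriv_nonpos_of_deriv_pos (f := -f) (f' := -f')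
      (fun x hx => (hf x hx).neg) hlt (congrArg Neg.neg heq) (neg_pos.mpr h₁) (neg_pos.mpr h₂)
    refine ⟨x₀, hx₀, neg_inj.mp hfx₀, mul_nonpos_of_nonneg_of_nonpos ?_ h₁.le⟩
    simpa using hderiv₀

theorem stmt_2 (f f' : ℝ → ℝ) (a b x₁ x₂ : ℝ)
    (hderiv : ∀ x ∈ Set.Ioo a b, HasDerivAt f (f' x) x)
    (hcont : ContinuousOn f' (Set.Ioo a b))
    (hx₁ : x₁ ∈ Set.Ioo a b) (hx₂ : x₂ ∈ Set.Ioo a b) (hlt : x₁ < x₂)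
    (heq : f x₁ = f x₂) (hsign : f' x₁ * f' x₂ > 0) :
    ∃ x₀ ∈ Set.Ioo x₁ x₂, f x₀ = f x₁ ∧ f' x₀ * f' x₁ ≤ 0 :=
  stmt_2_general f f' a b x₁ x₂ hderiv hx₁ hx₂ hlt heq hsign
end

section
/- Let f : ℝ → ℝ be continuously differentiable on (a, b), and suppose there are n > 1 points a < x₁ < x₂ < ... < xₙ < b with f(x₁) = ... = f(xₙ) = c and f'(xᵢ) < 0 for all i. Then there exist at least n − 1 additional points y₁ < ... < y_{n−1} in (a, b), each distinct from all xᵢ, with f(yⱼ) = c and f'(yⱼ) ≥ 0 for each j. -/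
/-! Since `f' xᵢ < 0`, `f < c` just right of `xᵢ`. The first return `y` of `f` to the level `c`
after such a point has `f < c` on its left, which forces `f' y ≥ 0`; in particular `y ≠ xᵢ₊₁`,
as `f' xᵢ₊₁ < 0`. So each gap `(xᵢ, xᵢ₊₁)` contains a wanted point, and these interlace with
the `xᵢ`. -/

open Set Filter Topology

namespace HasDerivAt

variable {f : ℝ → ℝ} {d p : ℝ}

theorem eventually_lt_nhdsGT_of_neg (h : HasDerivAt f d p) (hd : d < 0) :
    ∀ᶠ t in 𝓝[>] p, f t < f p := by
  have hslope : ∀ᶠ t in 𝓝[>] p, slope f p t < 0 :=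
    ((hasDerivAt_iff_tendsto_slope_left_right.1 h).2).eventually_lt_const hd
  filter_upwards [hslope, self_mem_nhdsWithin] with t ht (hpt : p < t)
  rw [slope_def_field] at ht
  linarith [neg_of_div_neg_left ht (sub_nonneg.2 hpt.le)]

theorem nonneg_of_eventually_le_nhdsLT (h : HasDerivAt f d p)
    (hle : ∀ᶠ t in 𝓝[<] p, f t ≤ f p) : 0 ≤ d := by
  refine ge_of_tendsto (hasDerivAt_iff_tendsto_slope_left_right.1 h).1 ?_
  filter_upwards [hle, self_mem_nhdsWithin] with t ht (htp : t < p)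
  rw [slope_def_field]
  exact div_nonneg_of_nonpos (sub_nonpos.2 ht) (sub_nonpos.2 htp.le)

end HasDerivAt

theorem exists_mem_Ioo_eq_and_deriv_nonneg {f f' : ℝ → ℝ} {c p q : ℝ} (hpq : p < q)
    (hf : ∀ t ∈ Icc p q, HasDerivAt f (f' t) t) (hfp : f p = c) (hfq : f q = c)
    (hp : f' p < 0) (hq : f' q < 0) : ∃ y ∈ Ioo p q, f y = c ∧ 0 ≤ f' y := by
  have hcont : ContinuousOn f (Icc p q) := fun t ht =>
    (hf t ht).continuousAt.continuousWithinAt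
  obtain ⟨t₁, hft₁, hpt₁, ht₁q⟩ :=
    (((hf p (left_mem_Icc.2 hpq.le)).eventually_lt_nhdsGT_of_neg hp).and
      (Ioo_mem_nhdsGT hpq)).exists
  rw [hfp] at hft₁
  have hsub : Icc t₁ q ⊆ Icc p q := Icc_subset_Icc_left hpt₁.le
  set S := Icc t₁ q ∩ f ⁻¹' {c}
  have hS : IsCompact S := isCompact_Icc.of_isClosed_subset
    ((hcont.mono hsub).preimage_isClosed_of_isClosed isClosed_Icc isClosed_singleton)
    inter_subset_left
  obtain ⟨y, ⟨⟨ht₁y, hyq⟩, hfy : f y = c⟩, hleast⟩ :=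
    hS.exists_isLeast ⟨q, ⟨ht₁q.le, le_rfl⟩, hfq⟩
  have hbelow : ∀ t ∈ Ico t₁ y, f t < c := by
    rintro t ⟨ht₁t, hty⟩
    by_contra! hct
    obtain ⟨s, ⟨ht₁s, hst⟩, hfs⟩ := intermediate_value_Icc ht₁t
      (hcont.mono ((Icc_subset_Icc_right (hty.le.trans hyq)).trans hsub)) ⟨hft₁.le, hct⟩
    exact (hleast ⟨⟨ht₁s, hst.trans (hty.le.trans hyq)⟩, hfs⟩).not_gt (hst.trans_lt hty)
  have ht₁y' : t₁ < y := ht₁y.lt_of_ne (by rintro rfl; exact hft₁.ne hfy)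
  have hy : 0 ≤ f' y := by
    refine (hf y ⟨hpt₁.le.trans ht₁y, hyq⟩).nonneg_of_eventually_le_nhdsLT ?_
    filter_upwards [Ioo_mem_nhdsLT ht₁y'] with t ht
    exact hfy ▸ (hbelow t ⟨ht.1.le, ht.2⟩).le
  exact ⟨y, ⟨hpt₁.trans ht₁y', hyq.lt_of_ne (by rintro rfl; linarith)⟩, hfy, hy⟩

section Interlacing

variable {α : Type*} [Preorder α] {m : ℕ} {x : Fin (m + 1) → α} {y : Fin m → α}

theorem StrictMono.of_mem_Ioo_castSucc_succ (hx : Monotone x)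
    (hy : ∀ j, y j ∈ Ioo (x j.castSucc) (x j.succ)) : StrictMono y := fun j k hjk =>
  calc y j < x j.succ := (hy j).2
    _ ≤ x k.castSucc := hx (Fin.succ_le_castSucc_iff.2 hjk)
    _ < y k := (hy k).1

theorem ne_of_mem_Ioo_castSucc_succ (hx : Monotone x)
    (hy : ∀ j, y j ∈ Ioo (x j.castSucc) (x j.succ)) (j : Fin m) (i : Fin (m + 1)) :
    y j ≠ x i := by
  rcases le_or_gt i j.castSucc with hij | hji
  · exact ((hx hij).trans_lt (hy j).1).ne'
  · exact ((hy j).2.trans_le (hx (Fin.castSucc_lt_iff_succ_le.1 hji))).ne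

end Interlacing

theorem stmt_4_general (f f' : ℝ → ℝ) (a b c : ℝ) (n : ℕ) (x : Fin n → ℝ)
    (hderiv : ∀ t ∈ Set.Ioo a b, HasDerivAt f (f' t) t)
    (hmono : StrictMono x) (hmem : ∀ i, x i ∈ Set.Ioo a b)
    (hval : ∀ i, f (x i) = c) (hneg : ∀ i, f' (x i) < 0) :
    ∃ y : Fin (n - 1) → ℝ, StrictMono y ∧
      (∀ j, y j ∈ Set.Ioo a b) ∧
      (∀ j i, y j ≠ x i) ∧
      (∀ j, f (y j) = c) ∧
      (∀ j, 0 ≤ f' (y j)) := by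
  cases n with
  | zero => exact ⟨finZeroElim, fun j => j.elim0, fun j => j.elim0, fun j => j.elim0,
      fun j => j.elim0, fun j => j.elim0⟩
  | succ m =>
    have hgap (j : Fin m) : ∃ z ∈ Ioo (x j.castSucc) (x j.succ), f z = c ∧ 0 ≤ f' z :=
      exists_mem_Ioo_eq_and_deriv_nonneg (hmono j.castSucc_lt_succ)
        (fun t ht => hderiv t ⟨(hmem _).1.trans_le ht.1, ht.2.trans_lt (hmem _).2⟩)
        (hval _) (hval _) (hneg _) (hneg _)
    choose y hy hfy hf'y using hgap
    exact ⟨y, .of_mem_Ioo_castSucc_succ hmono.monotone hy,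
      fun j => ⟨(hmem _).1.trans (hy j).1, (hy j).2.trans (hmem _).2⟩,
      ne_of_mem_Ioo_castSucc_succ hmono.monotone hy, hfy, hf'y⟩

theorem stmt_4 (f f' : ℝ → ℝ) (a b c : ℝ) (n : ℕ) (hn : 1 < n) (x : Fin n → ℝ)
    (hderiv : ∀ t ∈ Set.Ioo a b, HasDerivAt f (f' t) t)
    (hcont : ContinuousOn f' (Set.Ioo a b))
    (hmono : StrictMono x) (hmem : ∀ i, x i ∈ Set.Ioo a b)
    (hval : ∀ i, f (x i) = c) (hneg : ∀ i, f' (x i) < 0) :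
    ∃ y : Fin (n - 1) → ℝ, StrictMono y ∧
      (∀ j, y j ∈ Set.Ioo a b) ∧
      (∀ j i, y j ≠ x i) ∧
      (∀ j, f (y j) = c) ∧
      (∀ j, 0 ≤ f' (y j)) :=
  stmt_4_general f f' a b c n x hderiv hmono hmem hval hneg
end

section
/- Let f : ℝ → ℝ be continuously differentiable with exactly three zeros a < c < b, with f'(a) = f'(b) = −1. Then f'(c) ≥ 0. -/
/-!
Since `f' b < 0` and `f b = 0`, `f` is positive just to the left of `b`. As `f` has no zero in
`(c, b)`, the intermediate value theorem makes `f` positive on all of `(c, b)`. So the right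
difference quotients of `f` at its zero `c` are positive, and their limit `f' c` is nonnegative.
-/

open Filter Set Topology

lemma IsPreconnected.pos_of_ne_zero {X α : Type*} [TopologicalSpace X] [LinearOrder α]
    [TopologicalSpace α] [OrderClosedTopology α] [Zero α] {s : Set X} {f : X → α} {y : X}
    (hs : IsPreconnected s) (hf : ContinuousOn f s) (hne : ∀ x ∈ s, f x ≠ 0) (hy : y ∈ s)
    (hfy : 0 < f y) {x : X} (hx : x ∈ s) : 0 < f x := by
  by_contra! hfx
  obtain ⟨z, hz, hfz⟩ := hs.intermediate_value hx hy hf ⟨hfx, hfy.le⟩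
  exact hne z hz hfz

lemma HasDerivAt.eventually_lt_left_of_neg {f : ℝ → ℝ} {f' b : ℝ} (hf : HasDerivAt f f' b)
    (hf' : f' < 0) : ∀ᶠ x in 𝓝[<] b, f b < f x := by
  have hslope : Tendsto (slope f b) (𝓝[<] b) (𝓝 f') :=
    (hasDerivAt_iff_tendsto_slope.mp hf).mono_left (nhdsLT_le_nhdsNE b)
  filter_upwards [hslope.eventually (gt_mem_nhds hf'), self_mem_nhdsWithin] with x hneg hxb
  have hprod : 0 < (x - b) * slope f b x := mul_pos_of_neg_of_neg (sub_neg.mpr hxb) hneg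
  rw [← smul_eq_mul, sub_smul_slope] at hprod
  exact sub_pos.mp hprod

lemma HasDerivAt.nonneg_of_eventually_le_right {f : ℝ → ℝ} {f' c : ℝ} (hf : HasDerivAt f f' c)
    (h : ∀ᶠ x in 𝓝[>] c, f c ≤ f x) : 0 ≤ f' := by
  have hslope : Tendsto (slope f c) (𝓝[>] c) (𝓝 f') :=
    (hasDerivAt_iff_tendsto_slope.mp hf).mono_left (nhdsGT_le_nhdsNE c)
  refine ge_of_tendsto hslope ?_
  filter_upwards [h, self_mem_nhdsWithin] with x hle hcx
  rw [slope_def_field]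
  exact div_nonneg (sub_nonneg.mpr hle) (sub_nonneg.mpr (le_of_lt hcx))

theorem stmt_18_general (f : ℝ → ℝ) (a c b : ℝ) (hac : a < c) (hcb : c < b)
    (hdiff : Differentiable ℝ f)
    (hzeros : ∀ x : ℝ, f x = 0 ↔ x = a ∨ x = c ∨ x = b)
    (hb' : deriv f b = -1) :
    0 ≤ deriv f c := by
  have hne : ∀ x ∈ Ioo c b, f x ≠ 0 := by
    rintro x ⟨hcx, hxb⟩ hfx
    rcases (hzeros x).mp hfx with rfl | rfl | rfl
    · exact lt_asymm hac hcx
    · exact lt_irrefl x hcx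
    · exact lt_irrefl x hxb
  have hnear_b : ∀ᶠ x in 𝓝[<] b, 0 < f x := by
    have h := (hdiff b).hasDerivAt.eventually_lt_left_of_neg (hb' ▸ neg_one_lt_zero)
    rwa [(hzeros b).mpr (by simp)] at h
  obtain ⟨y, hfy, hy⟩ := (hnear_b.and (Ioo_mem_nhdsLT hcb)).exists
  refine (hdiff c).hasDerivAt.nonneg_of_eventually_le_right ?_
  filter_upwards [Ioo_mem_nhdsGT hcb] with x hx
  rw [(hzeros c).mpr (by simp)]
  exact (isPreconnected_Ioo.pos_of_ne_zero hdiff.continuous.continuousOn hne hy hfy hx).le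

theorem stmt_18 (f : ℝ → ℝ) (a c b : ℝ) (hac : a < c) (hcb : c < b)
    (hdiff : Differentiable ℝ f) (hcont : Continuous (deriv f))
    (hzeros : ∀ x : ℝ, f x = 0 ↔ x = a ∨ x = c ∨ x = b)
    (ha' : deriv f a = -1) (hb' : deriv f b = -1) :
    0 ≤ deriv f c :=
  stmt_18_general f a c b hac hcb hdiff hzeros hb'
end
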